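/- arXiv:2312.05643 — 2 statements merged into one kernel-verified Lean document; each statement's English description precedes it below -/
import Mathlib

section
/- Let g : ℝ → ℝ be the Heaviside step function with threshold V_th > 0. If O, E, C : ℝ with 0 ≤ O ≤ 1, C ≥ 0, and O = g(E - O·C), then g(E - C) ≤ O ≤ g(E). -/
/-- Scalar Proposition 1: the fixed point `O = g(E - O·C)` with `0 ≤ O ≤ 1`, `C ≥ 0`
satisfies `g(E - C) ≤ O ≤ g(E)`. -/
theorem scalar_spike_bounds (Vth : ℝ) (hVth : 0 < Vth)
    (g : ℝ → ℝ) (hg : ∀ a, g a = if Vth < a then 1 else 0)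
    (O E C : ℝ) (hO0 : 0 ≤ O) (hO1 : O ≤ 1) (hC : 0 ≤ C)
    (hfix : O = g (E - O * C)) :
    g (E - C) ≤ O ∧ O ≤ g E := by
  rw [hg] at hfix
  rw [hg, hg]
  by_cases h : Vth < E - O * C
  · simp only [h, if_true] at hfix
    subst hfix
    norm_num at h ⊢
    have hE : Vth < E := by nlinarith
    simp [h, hE]
  · simp only [h, if_false] at hfix
    subst hfix
    norm_num at h ⊢
    have h1 : ¬ Vth < E - C := by push_neg; linarith
    have h2 : ¬ Vth < E := by push_neg; linarith
    simp [h1, h2]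
end

section
/- Let τ, δt > 0, L(t) = e^{-t·δt/τ}, V_th > 0, w > 0, and t ∈ ℕ with t ≥ 1. Suppose x : ℕ → ℝ satisfies x(t) > 0 and x(i) < 0 for all i < t, and that f(i) := Σ_{k=0}^{i} w·x(k)·L(i-k) satisfies f(i) < 0 for all i < t and f(t) ∈ (0,1). Then, using the surrogate derivative ∂g/∂u = 1 on (0,1) and 0 elsewhere, the partial derivative ∂u_Ni(t)/∂w of the NiLIF membrane potential u_Ni(t) = f(t) − Σ_{i=0}^{t-1} g(f(i))·V_th·L(t-1-i) with respect to w equals Σ_{i=0}^{t} x(i)·L(t-i), which is nonzero. -/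
/-!
Each pre-activation `f(i) = w · Σₖ x(k) L(i-k)` is linear in `w`. For `i < t` the convolution
`Σₖ x(k) L(i-k)` is negative, so `f(i)` stays below the threshold for every positive weight and
the reset terms vanish on a neighbourhood of `w`. What remains is linear in `w` with slope
`Σₖ x(k) L(t-k) = f(t) / w > 0`.
-/

open Filter Topology

lemma sum_mul_mul_eq_mul_sum {ι R : Type*} [CommSemiring R] (s : Finset ι) (w : R) (a b : ι → R) :
    ∑ k ∈ s, w * a k * b k = w * ∑ k ∈ s, a k * b k := by
  simp only [Finset.mul_sum, mul_assoc]

lemma heaviside_eq_zero_of_le {g : ℝ → ℝ} {Vth a : ℝ} (hg : ∀ a, g a = if Vth < a then 1 else 0)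
    (ha : a ≤ Vth) : g a = 0 := by
  rw [hg, if_neg ha.not_gt]

lemma hasDerivAt_mul_const_sub_of_eventuallyEq_zero {R : ℝ → ℝ} {w c : ℝ} (hR : R =ᶠ[𝓝 w] 0) :
    HasDerivAt (fun w' => w' * c - R w') c w :=
  (hasDerivAt_mul_const c).congr_of_eventuallyEq (hR.mono fun w' h => by simp [h])

theorem nilif_gradient_nonvanishing_general (Vth : ℝ) (hVth : 0 < Vth)
    (L : ℕ → ℝ)
    (g : ℝ → ℝ) (hg : ∀ a, g a = if Vth < a then 1 else 0)
    (w : ℝ) (hw : 0 < w) (x : ℕ → ℝ) (t : ℕ)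
    (hfneg : ∀ i < t, (∑ k ∈ Finset.range (i + 1), w * x k * L (i - k)) < 0)
    (hft : (∑ k ∈ Finset.range (t + 1), w * x k * L (t - k)) ∈ Set.Ioo (0 : ℝ) 1) :
    HasDerivAt (fun w' : ℝ =>
        (∑ k ∈ Finset.range (t + 1), w' * x k * L (t - k)) -
          ∑ i ∈ Finset.range t,
            g (∑ k ∈ Finset.range (i + 1), w' * x k * L (i - k)) * Vth * L (t - 1 - i))
      (∑ i ∈ Finset.range (t + 1), x i * L (t - i)) w ∧
    (∑ i ∈ Finset.range (t + 1), x i * L (t - i)) ≠ 0 := by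
  simp only [sum_mul_mul_eq_mul_sum] at hfneg hft ⊢
  have hconv_neg : ∀ i < t, ∑ k ∈ Finset.range (i + 1), x k * L (i - k) < 0 :=
    fun i hi => neg_of_mul_neg_right (hfneg i hi) hw.le
  have hconv_pos : 0 < ∑ k ∈ Finset.range (t + 1), x k * L (t - k) :=
    pos_of_mul_pos_right hft.1 hw.le
  refine ⟨hasDerivAt_mul_const_sub_of_eventuallyEq_zero ?_, hconv_pos.ne'⟩
  filter_upwards [lt_mem_nhds hw] with w' hw'
  refine Finset.sum_eq_zero fun i hi => ?_
  have hbelow : w' * ∑ k ∈ Finset.range (i + 1), x k * L (i - k) ≤ Vth :=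
    (mul_neg_of_pos_of_neg hw' (hconv_neg i (Finset.mem_range.1 hi))).le.trans hVth.le
  rw [heaviside_eq_zero_of_le hg hbelow, zero_mul, zero_mul]

/-- Constructive part of Proposition 3: under the stated sign conditions the NiLIF
membrane potential is differentiable in `w` with derivative `Σ_{i=0}^{t} x(i)·L(t-i) ≠ 0`. -/
theorem nilif_gradient_nonvanishing (τ δt Vth : ℝ) (hτ : 0 < τ) (hδt : 0 < δt) (hVth : 0 < Vth)
    (L : ℕ → ℝ) (hL : ∀ s, L s = Real.exp (-((s : ℝ) * δt) / τ))
    (g : ℝ → ℝ) (hg : ∀ a, g a = if Vth < a then 1 else 0)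
    (w : ℝ) (hw : 0 < w) (x : ℕ → ℝ) (t : ℕ) (ht : 1 ≤ t)
    (hxt : 0 < x t) (hxneg : ∀ i < t, x i < 0)
    (hfneg : ∀ i < t, (∑ k ∈ Finset.range (i + 1), w * x k * L (i - k)) < 0)
    (hft : (∑ k ∈ Finset.range (t + 1), w * x k * L (t - k)) ∈ Set.Ioo (0 : ℝ) 1) :
    HasDerivAt (fun w' : ℝ =>
        (∑ k ∈ Finset.range (t + 1), w' * x k * L (t - k)) -
          ∑ i ∈ Finset.range t,
            g (∑ k ∈ Finset.range (i + 1), w' * x k * L (i - k)) * Vth * L (t - 1 - i))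
      (∑ i ∈ Finset.range (t + 1), x i * L (t - i)) w ∧
    (∑ i ∈ Finset.range (t + 1), x i * L (t - i)) ≠ 0 :=
  nilif_gradient_nonvanishing_general Vth hVth L g hg w hw x t hfneg hft
end
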